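/- arXiv:1712.06239 — 3 statements merged into one kernel-verified Lean document; each statement's English description precedes it below -/
import Mathlib

section
/- Let F be a finite set of polynomials in C[x_1,...,x_n] and H_X = {x_1^2 - x_1, ..., x_n^2 - x_n}. Then the ideal generated by F ∪ H_X in C[x_1,...,x_n] is equal to the intersection over all Boolean points a = (a_1,...,a_n) ∈ {0,1}^n of the ideals (F) + (x_1 - a_1, ..., x_n - a_n); in particular, the ideal (F, H_X) is a radical ideal. -/
/-!
Write `m_a = (x_1 - a_1, ..., x_n - a_n)`, the kernel of evaluation at `a`, and
`I = (F, x_i^2 - x_i)`. Every `m_a` with `a` Boolean contains the `x_i^2 - x_i`, which gives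
`I ⊆ ⋂_a ((F) + m_a)`. Conversely, the indicator polynomials
`e_b = ∏_i (b_i ? x_i : 1 - x_i)` of the Boolean points sum to `1`, and `e_b · m_b ⊆ I` because
`x_i · (x_i - 1)` and `(1 - x_i) · x_i` are field equations; so every `p` in the intersection
is `p = ∑_b e_b p ∈ I`. Radicality follows since each `(F) + m_a` contains a maximal ideal.
-/

open MvPolynomial

theorem Ideal.IsMaximal.isRadical_of_le {R : Type*} [CommRing R] {M J : Ideal R}
    (hM : M.IsMaximal) (hMJ : M ≤ J) : J.IsRadical := by
  rcases eq_or_ne J ⊤ with rfl | hJ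
  · exact fun _ _ => Submodule.mem_top
  · exact (hM.eq_of_le hJ hMJ ▸ hM).isPrime.isRadical

namespace MvPolynomial

variable {σ R : Type*} [CommRing R]

theorem sub_C_eval_mem_span_X_sub_C (a : σ → R) (p : MvPolynomial σ R) :
    p - C (eval a p) ∈ Ideal.span (Set.range fun i => X i - C (a i)) := by
  induction p using MvPolynomial.induction_on with
  | C c => simp
  | add p q hp hq =>
    convert Ideal.add_mem _ hp hq using 1
    simp only [map_add]; ring
  | mul_X p i hp =>
    have hXi : X i - C (a i) ∈ Ideal.span (Set.range fun i => X i - C (a i)) :=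
      Ideal.subset_span ⟨i, rfl⟩
    convert Ideal.add_mem _ (Ideal.mul_mem_left _ p hXi) (Ideal.mul_mem_left _ (C (a i)) hp)
      using 1
    simp only [map_mul, eval_X]; ring

theorem span_X_sub_C_eq_ker_eval (a : σ → R) :
    Ideal.span (Set.range fun i => X i - C (a i)) = RingHom.ker (eval a) := by
  refine le_antisymm (Ideal.span_le.mpr ?_) fun p hp => ?_
  · rintro _ ⟨i, rfl⟩
    simp
  · simpa [(RingHom.mem_ker).mp hp] using sub_C_eval_mem_span_X_sub_C a p

theorem isMaximal_span_X_sub_C {K : Type*} [Field K] (a : σ → K) :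
    (Ideal.span (Set.range fun i => X i - C (a i))).IsMaximal := by
  rw [span_X_sub_C_eq_ker_eval]
  exact RingHom.ker_isMaximal_of_surjective _ fun c => ⟨C c, eval_C c⟩

theorem X_sq_sub_X_mem_span_X_sub_C {a : σ → R} (ha : ∀ i, a i = 0 ∨ a i = 1) (i : σ) :
    X i ^ 2 - X i ∈ Ideal.span (Set.range fun i => X i - C (a i)) := by
  rw [span_X_sub_C_eq_ker_eval, RingHom.mem_ker]
  rcases ha i with h | h <;> simp [h]

def boolPoint (b : σ → Bool) : σ → R := fun i => if b i then 1 else 0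

theorem boolPoint_eq_zero_or_eq_one (b : σ → Bool) (i : σ) :
    (boolPoint b i : R) = 0 ∨ (boolPoint b i : R) = 1 := by
  unfold boolPoint
  cases b i <;> simp

section BooleanIndicator

variable [Fintype σ]

noncomputable def boolIndicator (b : σ → Bool) : MvPolynomial σ R :=
  ∏ i, if b i then X i else 1 - X i

theorem sum_boolIndicator [DecidableEq σ] : ∑ b : σ → Bool, boolIndicator (R := R) b = 1 := by
  have hfactor (i : σ) : ∑ β : Bool, (if β then X i else 1 - X i : MvPolynomial σ R) = 1 := by
    simp
  rw [← Finset.prod_const_one, ← Finset.prod_congr rfl fun i _ => hfactor i, Fintype.prod_sum]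
  rfl

theorem boolIndicator_mul_X_sub_C_mem {I : Ideal (MvPolynomial σ R)}
    (hI : ∀ i, X i ^ 2 - X i ∈ I) (b : σ → Bool) (i : σ) :
    boolIndicator b * (X i - C (boolPoint b i)) ∈ I := by
  have hfactor : (if b i then X i else 1 - X i) * (X i - C (boolPoint b i)) ∈ I := by
    cases hb : b i
    · convert I.neg_mem (hI i) using 1
      simp [boolPoint, hb]; ring
    · convert hI i using 1
      simp [boolPoint, hb]; ring
  exact Ideal.mem_of_dvd _
    (mul_dvd_mul_right (Finset.dvd_prod_of_mem _ (Finset.mem_univ i)) _) hfactor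

theorem iInf_sup_span_X_sub_C_boolPoint [DecidableEq σ] {I : Ideal (MvPolynomial σ R)}
    (hI : ∀ i, X i ^ 2 - X i ∈ I) :
    ⨅ b : σ → Bool, (I ⊔ Ideal.span (Set.range fun i => X i - C (boolPoint b i))) = I := by
  refine le_antisymm (fun p hp => ?_) (le_iInf fun _ => le_sup_left)
  rw [← mul_one p, ← sum_boolIndicator, Finset.mul_sum]
  refine Ideal.sum_mem _ fun b _ => ?_
  have hmul : Ideal.span {boolIndicator b} *
      (I ⊔ Ideal.span (Set.range fun i => X i - C (boolPoint b i))) ≤ I := by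
    rw [Ideal.mul_sup, Ideal.span_mul_span', Set.singleton_mul, ← Set.range_comp]
    exact sup_le Ideal.mul_le_right (Ideal.span_le.mpr <| Set.range_subset_iff.mpr
      (boolIndicator_mul_X_sub_C_mem hI b))
  rw [mul_comm]
  exact hmul (Ideal.mul_mem_mul (Ideal.mem_span_singleton_self _) (Ideal.mem_iInf.mp hp b))

end BooleanIndicator

end MvPolynomial

/-- The ideal generated by `F ∪ {x_i^2 - x_i}` equals the intersection over all Boolean
points `a ∈ {0,1}^n` of the ideals `(F) + (x_1 - a_1, ..., x_n - a_n)`; in particular it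
is a radical ideal. -/
theorem ideal_with_field_equations_eq_inter_max_ideals
    (n : ℕ) (F : Finset (MvPolynomial (Fin n) ℂ)) :
    (Ideal.span ((F : Set (MvPolynomial (Fin n) ℂ)) ∪
        {p : MvPolynomial (Fin n) ℂ | ∃ i : Fin n, p = X i ^ 2 - X i})
      = ⨅ a ∈ {a : Fin n → ℂ | ∀ i, a i = 0 ∨ a i = 1},
          Ideal.span (F : Set (MvPolynomial (Fin n) ℂ)) ⊔
            Ideal.span (Set.range fun i : Fin n => X i - C (a i))) ∧
    (Ideal.span ((F : Set (MvPolynomial (Fin n) ℂ)) ∪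
        {p : MvPolynomial (Fin n) ℂ | ∃ i : Fin n, p = X i ^ 2 - X i})).IsRadical := by
  set I := Ideal.span ((F : Set (MvPolynomial (Fin n) ℂ)) ∪
    {p : MvPolynomial (Fin n) ℂ | ∃ i : Fin n, p = X i ^ 2 - X i})
  set m : (Fin n → ℂ) → Ideal (MvPolynomial (Fin n) ℂ) :=
    fun a => Ideal.span (Set.range fun i : Fin n => X i - C (a i))
  have hFI : Ideal.span (F : Set (MvPolynomial (Fin n) ℂ)) ≤ I :=
    Ideal.span_mono Set.subset_union_left
  have hEq : I = ⨅ a ∈ {a : Fin n → ℂ | ∀ i, a i = 0 ∨ a i = 1},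
      Ideal.span (F : Set (MvPolynomial (Fin n) ℂ)) ⊔ m a := by
    refine le_antisymm (le_iInf₂ fun a ha => Ideal.span_le.mpr ?_) ?_
    · rintro p (hp | ⟨i, rfl⟩)
      · exact Ideal.mem_sup_left (Ideal.subset_span hp)
      · exact Ideal.mem_sup_right (X_sq_sub_X_mem_span_X_sub_C ha i)
    · calc ⨅ a ∈ {a : Fin n → ℂ | ∀ i, a i = 0 ∨ a i = 1}, Ideal.span ↑F ⊔ m a
          ≤ ⨅ b : Fin n → Bool, I ⊔ m (boolPoint b) :=
            le_iInf fun b => (iInf₂_le (boolPoint b) (boolPoint_eq_zero_or_eq_one b)).trans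
              (sup_le_sup_right hFI _)
        _ = I := iInf_sup_span_X_sub_C_boolPoint fun i => Ideal.subset_span (Or.inr ⟨i, rfl⟩)
  refine ⟨hEq, hEq ▸ Ideal.isRadical_iInf _ fun a => Ideal.isRadical_iInf _ fun _ => ?_⟩
  exact (isMaximal_span_X_sub_C a).isRadical_of_le le_sup_right
end

section
/- Let f = Σ_{k=1}^t m_k be a Boolean polynomial with t > s monomials, where s ≥ 3. Set S_t = ⌈(t-s)/(s-2)⌉ and introduce new Boolean variables u_1,...,u_{S_t}. Define the splitting set S(f,s) = {f̌_1,...,f̌_{S_t+1}} where f̌_1 = Σ_{k=1}^{s-1} m_k + u_1, f̌_j = Σ_{k=(j-1)(s-2)+2}^{j(s-2)+1} m_k + u_{j-1} + u_j for 2 ≤ j ≤ S_t, and f̌_{S_t+1} = Σ_{k=S_t(s-2)+2}^{t} m_k + u_{S_t}. Then each polynomial of S(f,s) has at most s monomials, and the ideal generated by S(f,s) in the Boolean ring F_2[X, U]/(field equations) intersected with the Boolean ring in X equals the ideal generated by f; moreover, the projection to the X-coordinates of the Boolean solution set of S(f,s) equals the Boolean solution set of f. -/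
open MvPolynomial

/-- The `k`-th monomial of `f`, as a polynomial in the extended variables. -/
noncomputable def MXmono (n St : ℕ) (m : ℕ → (Fin n →₀ ℕ)) (k : ℕ) :
    MvPolynomial (Fin n ⊕ Fin St) (ZMod 2) :=
  rename Sum.inl (monomial (m k) 1)

/-- The auxiliary variable `u_j` (1-based index `j ∈ {1,…,St}`). -/
noncomputable def uVar (n St : ℕ) (j : ℕ) : MvPolynomial (Fin n ⊕ Fin St) (ZMod 2) :=
  if h : j - 1 < St then X (Sum.inr (⟨j - 1, h⟩ : Fin St)) else 0

/-- The `j`-th polynomial `f̌_j` of the splitting set `S(f,s)` (1-based `j ∈ {1,…,St+1}`). -/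
noncomputable def splitPoly (n s t St : ℕ) (m : ℕ → (Fin n →₀ ℕ)) (j : ℕ) :
    MvPolynomial (Fin n ⊕ Fin St) (ZMod 2) :=
  if j = 1 then (∑ k ∈ Finset.Icc 1 (s - 1), MXmono n St m k) + uVar n St 1
  else if j = St + 1 then
    (∑ k ∈ Finset.Icc (St * (s - 2) + 2) t, MXmono n St m k) + uVar n St St
  else
    (∑ k ∈ Finset.Icc ((j - 1) * (s - 2) + 2) (j * (s - 2) + 1), MXmono n St m k)
      + uVar n St (j - 1) + uVar n St j

/-!
Substitute for `u_j` the prefix sum `m_1 + ⋯ + m_{j(s-2)+1}`, which ends where `f̌_j` ends. Each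
`u_j` occurs in exactly the two consecutive polynomials `f̌_j` and `f̌_{j+1}`, so over `𝔽₂` this
substitution sends `f̌_j` to `0` for `j ≤ S_t` and `f̌_{S_t+1}` to `f`. It supplies the Boolean
witnesses for the projected solution set. It is also a retraction of `𝔽₂[X, U]` onto `𝔽₂[X]`
that sends the field equations of `U` into the ideal of field equations of `X`, which proves
the inclusion `⊆` of the elimination ideal. The inclusion `⊇` holds because `f` is the sum of
all the `f̌_j`.
-/

open Finset

theorem MvPolynomial.card_support_add_le {σ R : Type*} [CommSemiring R]
    (p q : MvPolynomial σ R) : #(p + q).support ≤ #p.support + #q.support := by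
  classical exact (card_le_card support_add).trans (card_union_le _ _)

theorem MvPolynomial.card_support_sum_le {σ ι R : Type*} [CommSemiring R] (S : Finset ι)
    (g : ι → MvPolynomial σ R) (h : ∀ i ∈ S, #(g i).support ≤ 1) :
    #(∑ i ∈ S, g i).support ≤ #S := by
  classical
  calc #(∑ i ∈ S, g i).support ≤ #(S.biUnion fun i => (g i).support) := card_le_card support_sum
    _ ≤ #S * 1 := card_biUnion_le_card_mul _ _ _ h
    _ = #S := mul_one _

theorem MvPolynomial.sq_sub_self_mem_span_X_sq_sub_X {σ : Type*} (p : MvPolynomial σ (ZMod 2)) :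
    p ^ 2 - p ∈ Ideal.span {q | ∃ i, q = X i ^ 2 - X i} := by
  induction p using MvPolynomial.induction_on with
  | C c =>
    have hc : c ^ 2 = c := by revert c; decide
    rw [← map_pow, hc, sub_self]
    exact Ideal.zero_mem _
  | add p q hp hq =>
    rw [CharTwo.add_sq, add_sub_add_comm]
    exact Ideal.add_mem _ hp hq
  | mul_X p i hp =>
    have h : (p * X i) ^ 2 - p * X i = p ^ 2 * (X i ^ 2 - X i) + (p ^ 2 - p) * X i := by ring
    rw [h]
    exact Ideal.add_mem _ (Ideal.mul_mem_left _ _ (Ideal.subset_span ⟨i, rfl⟩))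
      (Ideal.mul_mem_right _ _ hp)

theorem Finset.sum_Icc_one_add_sum_Icc {M : Type*} [AddCommMonoid M] (c : ℕ → M) {a b : ℕ}
    (h : a ≤ b) : ∑ k ∈ Icc 1 a, c k + ∑ k ∈ Icc (a + 1) b, c k = ∑ k ∈ Icc 1 b, c k := by
  simpa only [← Icc_add_one_left_eq_Ioc, zero_add] using sum_Ioc_consecutive c a.zero_le h

section Splitting

variable {n : ℕ} (m : ℕ → Fin n →₀ ℕ)

noncomputable def prefixSum (N : ℕ) : MvPolynomial (Fin n) (ZMod 2) :=
  ∑ k ∈ Icc 1 N, monomial (m k) 1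

theorem rename_prefixSum (St N : ℕ) :
    rename Sum.inl (prefixSum m N) = ∑ k ∈ Icc 1 N, MXmono n St m k :=
  map_sum _ _ _

/-- `Sum.inr i` is the variable `u_{i+1}` of `uVar`. -/
noncomputable def extendByPrefixSums {A : Type*} [CommSemiring A] [Algebra (ZMod 2) A]
    (s St : ℕ) (a : Fin n → A) : Fin n ⊕ Fin St → A :=
  Sum.elim a fun i => aeval a (prefixSum m ((i + 1) * (s - 2) + 1))

variable {s t St : ℕ}

theorem sum_Icc_splitPoly (hs : 2 ≤ s) {j : ℕ} (hj : 1 ≤ j) (hjSt : j ≤ St) :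
    ∑ i ∈ Icc 1 j, splitPoly n s t St m i
      = rename Sum.inl (prefixSum m (j * (s - 2) + 1)) + uVar n St j := by
  induction j, hj using Nat.le_induction with
  | base =>
    rw [Icc_self, sum_singleton, splitPoly, if_pos rfl, rename_prefixSum, one_mul,
      show s - 2 + 1 = s - 1 by omega]
  | succ j hj ih =>
    have hblock := sum_Icc_one_add_sum_Icc (MXmono n St m)
      (show j * (s - 2) + 1 ≤ (j + 1) * (s - 2) + 1 by nlinarith)
    rw [sum_Icc_succ_top (by omega), ih (by omega), splitPoly, if_neg (by omega),
      if_neg (by omega), Nat.add_sub_cancel, rename_prefixSum, rename_prefixSum, ← hblock]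
    linear_combination CharTwo.add_self_eq_zero (uVar n St j)

theorem sum_splitPoly (hs : 2 ≤ s) (hSt : 1 ≤ St) (ht : St * (s - 2) + 1 ≤ t) :
    ∑ j ∈ Icc 1 (St + 1), splitPoly n s t St m j = rename Sum.inl (prefixSum m t) := by
  rw [sum_Icc_succ_top (by omega), sum_Icc_splitPoly m hs hSt le_rfl, splitPoly,
    if_neg (by omega), if_pos rfl, rename_prefixSum, rename_prefixSum,
    ← sum_Icc_one_add_sum_Icc _ ht]
  linear_combination CharTwo.add_self_eq_zero (uVar n St St)

theorem card_support_splitPoly_le (hs : 2 ≤ s) (ht : t ≤ St * (s - 2) + s) (j : ℕ) :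
    #(splitPoly n s t St m j).support ≤ s := by
  have hblock : ∀ a b, #(∑ k ∈ Icc a b, MXmono n St m k).support ≤ b + 1 - a := by
    intro a b
    refine (card_support_sum_le _ _ fun k _ => ?_).trans (Nat.card_Icc a b).le
    rw [MXmono, rename_monomial, support_monomial]
    split <;> simp
  have hu : ∀ i, #(uVar n St i).support ≤ 1 := by
    intro i
    unfold uVar
    split <;> simp [support_X]
  unfold splitPoly
  split_ifs
  · have := hblock 1 (s - 1)
    have := hu 1
    grw [card_support_add_le]
    omega
  · have := hblock (St * (s - 2) + 2) t
    have := hu St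
    grw [card_support_add_le]
    omega
  · have := hblock ((j - 1) * (s - 2) + 2) (j * (s - 2) + 1)
    have := hu (j - 1)
    have := hu j
    have := Nat.sub_one_mul j (s - 2)
    grw [card_support_add_le, card_support_add_le]
    omega

section Extension

variable {A : Type*} [CommSemiring A] [Algebra (ZMod 2) A] (a : Fin n → A)

theorem aeval_extendByPrefixSums_rename (p : MvPolynomial (Fin n) (ZMod 2)) :
    aeval (extendByPrefixSums m s St a) (rename Sum.inl p) = aeval a p := by
  rw [aeval_rename]
  rfl

theorem aeval_extendByPrefixSums_sum_Icc_splitPoly (hs : 2 ≤ s) {j : ℕ} (hj : j ≤ St) :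
    aeval (extendByPrefixSums m s St a) (∑ i ∈ Icc 1 j, splitPoly n s t St m i) = 0 := by
  rcases j.eq_zero_or_pos with rfl | hj1
  · simp
  have hu : aeval (extendByPrefixSums m s St a) (uVar n St j)
      = aeval a (prefixSum m (j * (s - 2) + 1)) := by
    rw [uVar, dif_pos (by omega), aeval_X]
    simp [extendByPrefixSums, Nat.sub_add_cancel hj1]
  rw [sum_Icc_splitPoly m hs hj1 hj, map_add, aeval_extendByPrefixSums_rename, hu, ← map_add,
    CharTwo.add_self_eq_zero, map_zero]

theorem aeval_extendByPrefixSums_splitPoly (hs : 2 ≤ s) {j : ℕ} (hj1 : 1 ≤ j) (hj : j ≤ St) :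
    aeval (extendByPrefixSums m s St a) (splitPoly n s t St m j) = 0 := by
  obtain ⟨i, rfl⟩ := Nat.exists_eq_add_of_le' hj1
  have h := aeval_extendByPrefixSums_sum_Icc_splitPoly (t := t) m a hs hj
  rwa [sum_Icc_succ_top (by omega), map_add,
    aeval_extendByPrefixSums_sum_Icc_splitPoly m a hs (by omega), zero_add] at h

theorem aeval_extendByPrefixSums_splitPoly_last (hs : 2 ≤ s) (hSt : 1 ≤ St)
    (ht : St * (s - 2) + 1 ≤ t) :
    aeval (extendByPrefixSums m s St a) (splitPoly n s t St m (St + 1))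
      = aeval a (prefixSum m t) := by
  have h := congrArg (aeval (extendByPrefixSums m s St a)) (sum_splitPoly m hs hSt ht)
  rwa [sum_Icc_succ_top (by omega), map_add,
    aeval_extendByPrefixSums_sum_Icc_splitPoly m a hs le_rfl, zero_add,
    aeval_extendByPrefixSums_rename] at h

end Extension

theorem comap_rename_span_splitPoly (hs : 2 ≤ s) (hSt : 1 ≤ St) (ht : St * (s - 2) + 1 ≤ t) :
    Ideal.comap
        (rename (Sum.inl : Fin n → Fin n ⊕ Fin St) :
          MvPolynomial (Fin n) (ZMod 2) →ₐ[ZMod 2]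
            MvPolynomial (Fin n ⊕ Fin St) (ZMod 2)).toRingHom
        (Ideal.span
          ({p | ∃ j ∈ Icc 1 (St + 1), p = splitPoly n s t St m j} ∪
            {p | ∃ v : Fin n ⊕ Fin St, p = X v ^ 2 - X v}))
      = Ideal.span ({prefixSum m t} ∪ {p | ∃ i : Fin n, p = X i ^ 2 - X i}) := by
  set ψ := aeval (R := ZMod 2)
    (extendByPrefixSums m s St (X : Fin n → MvPolynomial (Fin n) (ZMod 2))) with hψ_def
  have hψ : ∀ p, ψ (rename Sum.inl p) = p := fun p => by
    rw [aeval_extendByPrefixSums_rename, aeval_X_left_apply]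
  apply le_antisymm
  · intro p hp
    rw [← hψ p]
    refine Ideal.mem_comap.1 (Ideal.span_le.2 ?_ (Ideal.mem_comap.1 hp))
    rintro _ (⟨j, hj, rfl⟩ | ⟨v, rfl⟩) <;>
      simp only [SetLike.mem_coe, Ideal.mem_comap, hψ_def]
    · obtain ⟨hj1, hj⟩ := mem_Icc.1 hj
      rcases hj.lt_or_eq with hj | rfl
      · rw [aeval_extendByPrefixSums_splitPoly m _ hs hj1 (Nat.le_of_lt_succ hj)]
        exact Ideal.zero_mem _
      · rw [aeval_extendByPrefixSums_splitPoly_last m _ hs hSt ht, aeval_X_left_apply]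
        exact Ideal.subset_span (Or.inl rfl)
    · rw [map_sub, map_pow, aeval_X]
      rcases v with i | i
      · exact Ideal.subset_span (Or.inr ⟨i, rfl⟩)
      · exact Ideal.span_mono Set.subset_union_right (sq_sub_self_mem_span_X_sq_sub_X _)
  · refine Ideal.span_le.2 ?_
    rintro _ (rfl | ⟨i, rfl⟩) <;> simp only [SetLike.mem_coe, Ideal.mem_comap]
    · show rename Sum.inl (prefixSum m t) ∈ _
      rw [← sum_splitPoly m hs hSt ht]
      exact Ideal.sum_mem _ fun j hj => Ideal.subset_span (Or.inl ⟨j, hj, rfl⟩)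
    · show rename Sum.inl (X i ^ 2 - X i) ∈ _
      rw [map_sub, map_pow, rename_X]
      exact Ideal.subset_span (Or.inr ⟨_, rfl⟩)

theorem exists_eval_splitPoly_eq_zero_iff (hs : 2 ≤ s) (hSt : 1 ≤ St)
    (ht : St * (s - 2) + 1 ≤ t) (a : Fin n → ZMod 2) :
    (∃ b : Fin St → ZMod 2,
        ∀ j ∈ Icc 1 (St + 1), eval (Sum.elim a b) (splitPoly n s t St m j) = 0) ↔
      eval a (prefixSum m t) = 0 := by
  constructor
  · rintro ⟨b, hb⟩
    have h := congrArg (eval (Sum.elim a b)) (sum_splitPoly m hs hSt ht)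
    rwa [map_sum, sum_eq_zero hb, eval_rename, Sum.elim_comp_inl, eq_comm] at h
  · intro ha
    refine ⟨extendByPrefixSums m s St a ∘ Sum.inr, fun j hj => ?_⟩
    obtain ⟨hj1, hj⟩ := mem_Icc.1 hj
    change eval (extendByPrefixSums m s St a) _ = 0
    rw [← aeval_eq_eval]
    rcases hj.lt_or_eq with hj | rfl
    · exact aeval_extendByPrefixSums_splitPoly m a hs hj1 (Nat.le_of_lt_succ hj)
    · rwa [aeval_extendByPrefixSums_splitPoly_last m a hs hSt ht, aeval_eq_eval]

end Splitting

/-- `St = ⌈(t - s)/(s - 2)⌉`, so the last polynomial of the splitting set receives between `0`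
and `s - 1` of the monomials. -/
theorem splitCount_bounds {s t St : ℕ} (hs : 3 ≤ s) (hts : s < t)
    (hSt : St = ((t - s) + (s - 3)) / (s - 2)) :
    1 ≤ St ∧ St * (s - 2) + 1 ≤ t ∧ t ≤ St * (s - 2) + s := by
  have hd : 0 < s - 2 := by omega
  rw [show t - s + (s - 3) = t - 3 by omega] at hSt
  have hlow := Nat.div_mul_le_self (t - 3) (s - 2)
  have hupp := Nat.lt_div_mul_add (a := t - 3) hd
  rw [← hSt] at hlow hupp
  exact ⟨hSt ▸ (Nat.one_le_div_iff hd).2 (by omega), by omega, by omega⟩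

theorem splitting_set_properties_general
    (n s t : ℕ) (hs : 3 ≤ s) (hts : s < t)
    (m : ℕ → (Fin n →₀ ℕ))
    (St : ℕ) (hSt : St = ((t - s) + (s - 3)) / (s - 2)) :
    (∀ j ∈ Finset.Icc 1 (St + 1), (splitPoly n s t St m j).support.card ≤ s) ∧
    (Ideal.comap
        (rename (Sum.inl : Fin n → Fin n ⊕ Fin St) :
          MvPolynomial (Fin n) (ZMod 2) →ₐ[ZMod 2]
            MvPolynomial (Fin n ⊕ Fin St) (ZMod 2)).toRingHom
        (Ideal.span
          ({p | ∃ j ∈ Finset.Icc 1 (St + 1), p = splitPoly n s t St m j} ∪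
            {p : MvPolynomial (Fin n ⊕ Fin St) (ZMod 2) |
              ∃ v : Fin n ⊕ Fin St, p = X v ^ 2 - X v}))
      = Ideal.span
          ({∑ k ∈ Finset.Icc 1 t, monomial (m k) (1 : ZMod 2)} ∪
            {p : MvPolynomial (Fin n) (ZMod 2) | ∃ i : Fin n, p = X i ^ 2 - X i})) ∧
    ({a : Fin n → ZMod 2 | ∃ b : Fin St → ZMod 2,
        ∀ j ∈ Finset.Icc 1 (St + 1), eval (Sum.elim a b) (splitPoly n s t St m j) = 0}
      = {a : Fin n → ZMod 2 |
          eval a (∑ k ∈ Finset.Icc 1 t, monomial (m k) (1 : ZMod 2)) = 0}) := by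
  obtain ⟨hSt1, hlow, hupp⟩ := splitCount_bounds hs hts hSt
  have hs2 : 2 ≤ s := by omega
  exact ⟨fun j _ => card_support_splitPoly_le m hs2 hupp j,
    comap_rename_span_splitPoly m hs2 hSt1 hlow,
    Set.ext fun a => exists_eval_splitPoly_eq_zero_iff m hs2 hSt1 hlow a⟩

/-- Splitting a Boolean polynomial `f = m_1 + ⋯ + m_t` (`t > s ≥ 3`) into the `s`-sparse
system `S(f,s)` with `St = ⌈(t-s)/(s-2)⌉` new variables: every `f̌_j` has at most `s`
monomials, the ideal generated by `S(f,s)` together with the field equations, intersected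
with the Boolean ring in `X`, is the ideal generated by `f` and the `X`-field equations,
and the projection to the `X`-coordinates of the solution set of `S(f,s)` is the solution
set of `f`. -/
theorem splitting_set_properties
    (n s t : ℕ) (hs : 3 ≤ s) (hts : s < t)
    (m : ℕ → (Fin n →₀ ℕ))
    (hm_inj : ∀ k ∈ Finset.Icc 1 t, ∀ k' ∈ Finset.Icc 1 t, m k = m k' → k = k')
    (hm_sf : ∀ k ∈ Finset.Icc 1 t, ∀ i, m k i ≤ 1)
    (St : ℕ) (hSt : St = ((t - s) + (s - 3)) / (s - 2)) :
    (∀ j ∈ Finset.Icc 1 (St + 1), (splitPoly n s t St m j).support.card ≤ s) ∧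
    (Ideal.comap
        (rename (Sum.inl : Fin n → Fin n ⊕ Fin St) :
          MvPolynomial (Fin n) (ZMod 2) →ₐ[ZMod 2]
            MvPolynomial (Fin n ⊕ Fin St) (ZMod 2)).toRingHom
        (Ideal.span
          ({p | ∃ j ∈ Finset.Icc 1 (St + 1), p = splitPoly n s t St m j} ∪
            {p : MvPolynomial (Fin n ⊕ Fin St) (ZMod 2) |
              ∃ v : Fin n ⊕ Fin St, p = X v ^ 2 - X v}))
      = Ideal.span
          ({∑ k ∈ Finset.Icc 1 t, monomial (m k) (1 : ZMod 2)} ∪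
            {p : MvPolynomial (Fin n) (ZMod 2) | ∃ i : Fin n, p = X i ^ 2 - X i})) ∧
    ({a : Fin n → ZMod 2 | ∃ b : Fin St → ZMod 2,
        ∀ j ∈ Finset.Icc 1 (St + 1), eval (Sum.elim a b) (splitPoly n s t St m j) = 0}
      = {a : Fin n → ZMod 2 |
          eval a (∑ k ∈ Finset.Icc 1 t, monomial (m k) (1 : ZMod 2)) = 0}) :=
  splitting_set_properties_general n s t hs hts m St hSt
end

section
/- Let I = (F) ⊂ C[x_1,...,x_n] be a radical zero-dimensional ideal with finite zero set {a_1,...,a_w}, and let D ≥ csdeg(F). Then every solution of the Macaulay linear system M_{F,D} m_D = b_{F,D} restricted to the coordinates indexed by monomials of degree ≤ D is of the form Σ_{i=1}^w η_i m_D(a_i) with Σ_i η_i = 1, where m_D(a_i) is the vector of values at a_i of all nonconstant monomials of degree ≤ D; conversely every such affine combination is a solution. (Coordinates indexed by monomials of degree > D are unconstrained.) -/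
open MvPolynomial

/-- Degree reverse lexicographic order (for `x_1 > ⋯ > x_n`): `a < b` iff `a` has smaller
total degree, or degrees are equal and at the largest index where they differ, `a` has the
larger exponent. -/
def DrlLt {n : ℕ} (a b : Fin n →₀ ℕ) : Prop :=
  (∑ i, a i) < (∑ i, b i) ∨
    ((∑ i, a i) = (∑ i, b i) ∧
      ∃ i : Fin n, b i < a i ∧ ∀ j : Fin n, i < j → a j = b j)

/-- `m` is the leading monomial of `f` with respect to the DRL ordering. -/
def IsLeadingMonomial {n : ℕ} (f : MvPolynomial (Fin n) ℂ) (m : Fin n →₀ ℕ) : Prop :=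
  m ∈ f.support ∧ ∀ m' ∈ f.support, m' ≠ m → DrlLt m' m

/-- `G` is a Gröbner basis of the ideal `I` with respect to the DRL ordering. -/
def IsGB {n : ℕ} (I : Ideal (MvPolynomial (Fin n) ℂ))
    (G : Finset (MvPolynomial (Fin n) ℂ)) : Prop :=
  (G : Set (MvPolynomial (Fin n) ℂ)) ⊆ I ∧
  Ideal.span (G : Set (MvPolynomial (Fin n) ℂ)) = I ∧
  ∀ f ∈ I, f ≠ (0 : MvPolynomial (Fin n) ℂ) →
    ∃ g ∈ G, ∃ mg mf : Fin n →₀ ℕ,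
      IsLeadingMonomial g mg ∧ IsLeadingMonomial f mf ∧ ∀ i, mg i ≤ mf i

/-- `G` is the reduced Gröbner basis of `I` for the DRL ordering: a Gröbner basis whose
elements are monic and no monomial of an element is divisible by the leading monomial of
another element. -/
def IsReducedGB {n : ℕ} (I : Ideal (MvPolynomial (Fin n) ℂ))
    (G : Finset (MvPolynomial (Fin n) ℂ)) : Prop :=
  IsGB I G ∧
  ∀ g ∈ G, ∃ mg : Fin n →₀ ℕ, IsLeadingMonomial g mg ∧ g.coeff mg = 1 ∧
    ∀ m ∈ g.support, ∀ g' ∈ G, g' ≠ g → ∀ mg' : Fin n →₀ ℕ,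
      IsLeadingMonomial g' mg' → ¬ ∀ i, mg' i ≤ m i

/-!
Let `L_v` be the linear functional on `ℂ[x]` sending each monomial `x^c` to `v c`; the Macaulay
equations say exactly that `L_v` kills every product `x^k f` (`f ∈ F`) of degree `≤ D`, hence
every `h f` of degree `≤ D`. Dividing by the reduced DRL Gröbner basis `G` of `I = (F)` writes
each `p ∈ I` of degree `≤ D` as `∑ q_g g` with `deg (q_g g) ≤ D`, because DRL refines the total
degree; as `D ≥ csdeg F`, each `x^k g` occurring here is a degree-`≤ D` combination of
the `f ∈ F`, so `L_v` vanishes on `I_{≤ D}`. By the Nullstellensatz `I` is the vanishing ideal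
of `{a_1, …, a_w}`, so on polynomials of degree `≤ D` the functional `L_v` vanishes on the common
kernel of the evaluations at the `a_i` and is therefore a combination `∑ η_i ev_{a_i}`; evaluating
at `1` gives `∑ η_i = 1`. Conversely, such a combination kills `x^k f` since `f (a_i) = 0`.
-/

open scoped MonomialOrder

section Drl

variable {n : ℕ}

/-- DRL compares total degrees first and then reverses the colexicographic order. -/
noncomputable def drlKey (a : Fin n →₀ ℕ) : ℕ ×ₗ (Colex (Fin n →₀ ℕ))ᵒᵈ :=
  toLex (a.degree, OrderDual.toDual (toColex a))

theorem drlLt_iff_drlKey_lt {a b : Fin n →₀ ℕ} : DrlLt a b ↔ drlKey a < drlKey b := by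
  simp only [DrlLt, drlKey, Prod.Lex.toLex_lt_toLex, OrderDual.toDual_lt_toDual,
    Finsupp.Colex.lt_iff, Finsupp.degree_eq_sum, ofColex_toColex]
  refine or_congr Iff.rfl (and_congr Iff.rfl (exists_congr fun i => ?_))
  exact and_comm.trans (and_congr (forall₂_congr fun j _ => eq_comm) Iff.rfl)

theorem drlKey_injective : Function.Injective (drlKey (n := n)) := fun _ _ h =>
  toColex_inj.mp (OrderDual.toDual_inj.mp (congrArg (fun p => (ofLex p).2) h))

theorem drlKey_add (a b : Fin n →₀ ℕ) : drlKey (a + b) = drlKey a + drlKey b := by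
  simp only [drlKey, map_add]
  rfl

theorem drlKey_monotone : Monotone (drlKey (n := n)) := by
  intro a b hab
  rcases eq_or_ne a b with rfl | hne
  · exact le_rfl
  obtain ⟨i, hi⟩ := Finsupp.ne_iff.mp hne
  refine le_of_lt (Prod.Lex.toLex_lt_toLex.mpr (Or.inl ?_))
  simp only [Finsupp.degree_eq_sum]
  exact Finset.sum_lt_sum (fun j _ => hab j) ⟨i, Finset.mem_univ _, lt_of_le_of_ne (hab i) hi⟩

def DrlExponent (n : ℕ) : Type := Fin n →₀ ℕ

noncomputable instance : AddCommMonoid (DrlExponent n) :=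
  inferInstanceAs (AddCommMonoid (Fin n →₀ ℕ))

noncomputable instance : LinearOrder (DrlExponent n) :=
  LinearOrder.lift' (drlKey (n := n)) drlKey_injective

instance : IsOrderedAddMonoid (DrlExponent n) where
  add_le_add_left a b hab c := by
    show drlKey (a + c) ≤ drlKey (b + c)
    exact (drlKey_add a c).trans_le
      ((add_le_add_left (show drlKey a ≤ drlKey b from hab) _).trans_eq (drlKey_add b c).symm)

/-- A linear order refining the divisibility order is a well-order, by Dickson's lemma. -/
instance : WellFoundedLT (DrlExponent n) :=
  have : WellQuasiOrderedLE (DrlExponent n) :=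
    Monotone.wellQuasiOrderedLE_of_wellQuasiOrderedLE_of_surjective
      (f := fun a : Fin n →₀ ℕ => (a : DrlExponent n)) drlKey_monotone Function.surjective_id
  inferInstance

noncomputable def MonomialOrder.drl (n : ℕ) : MonomialOrder (Fin n) where
  syn := DrlExponent n
  toSyn := AddEquiv.refl _
  toSyn_monotone := drlKey_monotone

end Drl

namespace MonomialOrder

variable {n : ℕ}

theorem drl_lt_iff {a b : Fin n →₀ ℕ} : a ≺[drl n] b ↔ DrlLt a b :=
  drlLt_iff_drlKey_lt.symm

theorem degree_le_of_drl_le {a b : Fin n →₀ ℕ} (h : a ≼[drl n] b) : a.degree ≤ b.degree := by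
  rcases Prod.Lex.toLex_le_toLex.mp (show drlKey a ≤ drlKey b from h) with h | ⟨h, -⟩ <;>
    exact h.le

theorem totalDegree_eq_degree_drl_degree {R : Type*} [CommSemiring R]
    (f : MvPolynomial (Fin n) R) : f.totalDegree = ((drl n).degree f).degree := by
  by_cases hf : f = 0
  · simp [hf]
  refine le_antisymm (Finset.sup_le fun c hc => degree_le_of_drl_le ((drl n).le_degree hc)) ?_
  exact le_totalDegree ((drl n).degree_mem_support hf)

theorem totalDegree_le_of_drl_degree_le {R : Type*} [CommSemiring R]
    {f g : MvPolynomial (Fin n) R} (h : (drl n).degree f ≼[drl n] (drl n).degree g) :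
    f.totalDegree ≤ g.totalDegree := by
  rw [totalDegree_eq_degree_drl_degree, totalDegree_eq_degree_drl_degree]
  exact degree_le_of_drl_le h

variable {σ : Type*} (m : MonomialOrder σ)

def leadingExponents {R : Type*} [CommSemiring R] (I : Ideal (MvPolynomial σ R)) :
    Set (σ →₀ ℕ) :=
  m.degree '' ((I : Set (MvPolynomial σ R)) \ {0})

structure IsReducedGroebnerBasis {K : Type*} [Field K] (I : Ideal (MvPolynomial σ K))
    (G : Finset (MvPolynomial σ K)) : Prop where
  subset : (G : Set (MvPolynomial σ K)) ⊆ I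
  exists_degree_le : ∀ f ∈ I, f ≠ 0 → ∃ g ∈ G, m.degree g ≤ m.degree f
  monic : ∀ g ∈ G, m.Monic g
  reduced : ∀ g ∈ G, ∀ g' ∈ G, g' ≠ g → ∀ c ∈ g.support, ¬ m.degree g' ≤ c

variable {m}

theorem exists_eq_linearCombination_of_forall_exists_degree_le {R : Type*} [CommRing R]
    {I : Ideal (MvPolynomial σ R)} {G : Set (MvPolynomial σ R)} (hGI : G ⊆ I)
    (hG : ∀ g ∈ G, IsUnit (m.leadingCoeff g))
    (hdeg : ∀ f ∈ I, f ≠ 0 → ∃ g ∈ G, m.degree g ≤ m.degree f) {f : MvPolynomial σ R}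
    (hf : f ∈ I) :
    ∃ q : G →₀ MvPolynomial σ R, f = Finsupp.linearCombination _ (↑) q ∧
      ∀ g : G, m.degree ((g : MvPolynomial σ R) * q g) ≼[m] m.degree f := by
  obtain ⟨q, r, hfr, hq, hr⟩ := m.div_set hG f
  suffices r = 0 by exact ⟨q, by rw [hfr, this, add_zero], hq⟩
  by_contra hr0
  have hrI : r ∈ I := by
    rw [← add_sub_cancel_left (Finsupp.linearCombination _ (↑) q) r, ← hfr]
    exact I.sub_mem hf (Submodule.span_le.mpr hGI
      ((Finsupp.mem_span_iff_linearCombination _ _ _).mpr ⟨q, rfl⟩))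
  obtain ⟨g, hg, hle⟩ := hdeg r hrI hr0
  exact hr _ (m.degree_mem_support hr0) g hg hle

variable {K : Type*} [Field K]

theorem isUpperSet_leadingExponents (I : Ideal (MvPolynomial σ K)) :
    IsUpperSet (m.leadingExponents I) := by
  rintro _ c hc ⟨f, ⟨hfI, hf0⟩, rfl⟩
  have hf0 : f ≠ 0 := hf0
  refine ⟨monomial (c - m.degree f) 1 * f, ⟨I.mul_mem_left _ hfI, mul_ne_zero (by simp) hf0⟩, ?_⟩
  classical
  rw [degree_mul (by simp) hf0, degree_monomial, if_neg one_ne_zero, tsub_add_cancel_of_le hc]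

/-- Division by all nonzero elements of `I` yields a normal form modulo `I`. -/
theorem exists_sub_mem_forall_notMem_leadingExponents (I : Ideal (MvPolynomial σ K))
    (f : MvPolynomial σ K) :
    ∃ r, f - r ∈ I ∧ ∀ c ∈ r.support, c ∉ m.leadingExponents I := by
  obtain ⟨q, r, hfr, -, hr⟩ := m.div_set (B := (I : Set (MvPolynomial σ K)) \ {0})
    (fun b hb => isUnit_iff_ne_zero.mpr (m.leadingCoeff_ne_zero_iff.mpr hb.2)) f
  refine ⟨r, ?_, ?_⟩
  · rw [hfr, add_sub_cancel_right]
    exact Submodule.span_le.mpr Set.sdiff_subset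
      ((Finsupp.mem_span_iff_linearCombination _ _ _).mpr ⟨q, rfl⟩)
  · rintro c hc ⟨b, hb, hbc⟩
    exact hr c hc b hb hbc.le

theorem degree_monomial_sub_of_forall_notMem {I : Ideal (MvPolynomial σ K)} {μ : σ →₀ ℕ}
    (hμ : μ ∈ m.leadingExponents I) {r : MvPolynomial σ K}
    (hr : ∀ c ∈ r.support, c ∉ m.leadingExponents I) (hI : monomial μ 1 - r ∈ I) :
    m.degree (monomial μ 1 - r) = μ ∧ m.Monic (monomial μ 1 - r) := by
  classical
  have hcoeff : (monomial μ 1 - r).coeff μ = 1 := by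
    rw [coeff_sub, coeff_monomial, if_pos rfl, notMem_support_iff.mp fun h => hr μ h hμ, sub_zero]
  have hne : monomial μ 1 - r ≠ 0 := fun h => by simp [h] at hcoeff
  have hdeg : m.degree (monomial μ 1 - r) = μ := by
    rcases Finset.mem_union.mp (support_sub _ _ _ (m.degree_mem_support hne)) with h | h
    · simpa using support_monomial_subset h
    · exact absurd ⟨_, ⟨hI, hne⟩, rfl⟩ (hr _ h)
  exact ⟨hdeg, by rw [Monic, leadingCoeff, hdeg, hcoeff]⟩

/-- The reduced Gröbner basis consists of the `x^μ - NF(x^μ)` for the minimal leading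
exponents `μ` of `I`, finitely many by Dickson's lemma. -/
theorem exists_isReducedGroebnerBasis (m : MonomialOrder σ) [Finite σ]
    (I : Ideal (MvPolynomial σ K)) : ∃ G, m.IsReducedGroebnerBasis I G := by
  classical
  set E := m.leadingExponents I
  have hfin : {μ | Minimal (· ∈ E) μ}.Finite :=
    WellQuasiOrderedLE.finite_of_isAntichain (setOfPred_minimal_antichain _)
  choose r hrI hrE using fun μ : σ →₀ ℕ =>
    exists_sub_mem_forall_notMem_leadingExponents (m := m) I (monomial μ (1 : K))
  have hgen (μ) (hμ : μ ∈ E) := degree_monomial_sub_of_forall_notMem hμ (hrE μ) (hrI μ)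
  refine ⟨hfin.toFinset.image fun μ => monomial μ 1 - r μ, ⟨?_, ?_, ?_, ?_⟩⟩
  · intro _ hg
    obtain ⟨μ, -, rfl⟩ := Finset.mem_image.mp hg
    exact hrI μ
  · intro f hf hf0
    obtain ⟨μ, hμf, hμ⟩ := exists_minimal_le_of_wellFoundedLT (· ∈ E) _ ⟨f, ⟨hf, hf0⟩, rfl⟩
    exact ⟨_, Finset.mem_image_of_mem _ (hfin.mem_toFinset.mpr hμ),
      (hgen μ hμ.prop).1.symm ▸ hμf⟩
  · intro g hg
    obtain ⟨μ, hμ, rfl⟩ := Finset.mem_image.mp hg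
    exact (hgen μ (hfin.mem_toFinset.mp hμ).prop).2
  · intro g hg g' hg' hne c hc hle
    obtain ⟨μ, hμ, rfl⟩ := Finset.mem_image.mp hg
    obtain ⟨μ', hμ', rfl⟩ := Finset.mem_image.mp hg'
    rw [Set.Finite.mem_toFinset] at hμ hμ'
    rw [(hgen μ' hμ'.prop).1] at hle
    rcases Finset.mem_union.mp (support_sub _ _ _ hc) with h | h
    · obtain rfl : c = μ := by simpa using support_monomial_subset h
      exact hne (by rw [hμ.eq_of_ge hμ'.prop hle])
    · exact hrE μ c h (isUpperSet_leadingExponents I hle hμ'.prop)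

namespace IsReducedGroebnerBasis

variable {I : Ideal (MvPolynomial σ K)} {G : Finset (MvPolynomial σ K)}

theorem isUnit_leadingCoeff (hG : m.IsReducedGroebnerBasis I G) {g : MvPolynomial σ K}
    (hg : g ∈ G) : IsUnit (m.leadingCoeff g) :=
  (hG.monic g hg).symm ▸ isUnit_one

theorem span_eq (hG : m.IsReducedGroebnerBasis I G) :
    Ideal.span (G : Set (MvPolynomial σ K)) = I := by
  refine le_antisymm (Ideal.span_le.mpr hG.subset) fun f hf => ?_
  obtain ⟨q, rfl, -⟩ := exists_eq_linearCombination_of_forall_exists_degree_le hG.subset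
    (fun _ => hG.isUnit_leadingCoeff) hG.exists_degree_le hf
  exact (Finsupp.mem_span_iff_linearCombination _ _ _).mpr ⟨q, rfl⟩

end IsReducedGroebnerBasis

end MonomialOrder

open MonomialOrder in
theorem isLeadingMonomial_iff {n : ℕ} {f : MvPolynomial (Fin n) ℂ} {μ : Fin n →₀ ℕ} :
    IsLeadingMonomial f μ ↔ f ≠ 0 ∧ (MonomialOrder.drl n).degree f = μ := by
  constructor
  · rintro ⟨hμ, hmax⟩
    have hf : f ≠ 0 := by
      rintro rfl
      simp at hμ
    refine ⟨hf, by_contra fun hne => ?_⟩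
    exact (drl_lt_iff.mpr (hmax _ ((drl n).degree_mem_support hf) hne)).not_ge
      ((drl n).le_degree hμ)
  · rintro ⟨hf, rfl⟩
    exact ⟨(drl n).degree_mem_support hf, fun μ hμ hne =>
      drl_lt_iff.mp (lt_of_le_of_ne ((drl n).le_degree hμ) ((drl n).toSyn.injective.ne hne))⟩

theorem MonomialOrder.IsReducedGroebnerBasis.isReducedGB {n : ℕ}
    {I : Ideal (MvPolynomial (Fin n) ℂ)} {G : Finset (MvPolynomial (Fin n) ℂ)}
    (hG : (drl n).IsReducedGroebnerBasis I G) : IsReducedGB I G := by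
  have hlm (f : MvPolynomial (Fin n) ℂ) (hf : f ≠ 0) : IsLeadingMonomial f ((drl n).degree f) :=
    isLeadingMonomial_iff.mpr ⟨hf, rfl⟩
  refine ⟨⟨hG.subset, hG.span_eq, fun f hf hf0 => ?_⟩, fun g hg => ?_⟩
  · obtain ⟨g, hg, hle⟩ := hG.exists_degree_le f hf hf0
    exact ⟨g, hg, _, _, hlm g (hG.monic g hg).ne_zero, hlm f hf0, hle⟩
  · refine ⟨_, hlm g (hG.monic g hg).ne_zero, (hG.monic g hg).coeff_degree,
      fun c hc g' hg' hne μ hμ hle => ?_⟩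
    obtain rfl := (isLeadingMonomial_iff.mp hμ).2
    exact hG.reduced g hg g' hg' hne c hc hle

theorem totalDegree_monomial_one_mul_le {σ R : Type*} [CommSemiring R] (k : σ →₀ ℕ)
    (f : MvPolynomial σ R) : (monomial k 1 * f).totalDegree ≤ k.degree + f.totalDegree :=
  (totalDegree_mul _ _).trans (Nat.add_le_add_right (totalDegree_monomial_le k 1) _)

theorem map_mul_eq_zero_of_forall_monomial_mul {σ R M : Type*} [CommSemiring R]
    [NoZeroDivisors R] [AddCommMonoid M] [Module R M] (L : MvPolynomial σ R →ₗ[R] M) {D : ℕ}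
    {g : MvPolynomial σ R}
    (hL : ∀ k : σ →₀ ℕ, k.degree + g.totalDegree ≤ D → L (monomial k 1 * g) = 0)
    {h : MvPolynomial σ R} (hD : (h * g).totalDegree ≤ D) : L (h * g) = 0 := by
  rcases eq_or_ne h 0 with rfl | hh
  · simp
  rcases eq_or_ne g 0 with rfl | hg
  · simp
  rw [totalDegree_mul_of_isDomain hh hg] at hD
  rw [h.as_sum, Finset.sum_mul, map_sum]
  refine Finset.sum_eq_zero fun k hk => ?_
  have hsmul : monomial k (h.coeff k) * g = h.coeff k • (monomial k 1 * g) := by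
    rw [← smul_mul_assoc, smul_monomial, smul_eq_mul, mul_one]
  rw [hsmul, map_smul, hL k ((Nat.add_le_add_right (le_totalDegree hk) _).trans hD), smul_zero]

theorem MonomialOrder.IsReducedGroebnerBasis.map_eq_zero_of_totalDegree_le {n : ℕ}
    {K M : Type*} [Field K] [AddCommMonoid M] [Module K M] {I : Ideal (MvPolynomial (Fin n) K)}
    {G : Finset (MvPolynomial (Fin n) K)} (hG : (drl n).IsReducedGroebnerBasis I G)
    (L : MvPolynomial (Fin n) K →ₗ[K] M) {D : ℕ}
    (hL : ∀ g ∈ G, ∀ k : Fin n →₀ ℕ, k.degree + g.totalDegree ≤ D → L (monomial k 1 * g) = 0)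
    {f : MvPolynomial (Fin n) K} (hf : f ∈ I) (hfD : f.totalDegree ≤ D) : L f = 0 := by
  obtain ⟨q, rfl, hq⟩ := exists_eq_linearCombination_of_forall_exists_degree_le hG.subset
    (fun _ => hG.isUnit_leadingCoeff) hG.exists_degree_le hf
  rw [Finsupp.linearCombination_apply, map_finsuppSum]
  refine Finset.sum_eq_zero fun g _ => ?_
  refine map_mul_eq_zero_of_forall_monomial_mul L (hL g g.2) (le_trans ?_ hfD)
  rw [mul_comm]
  exact totalDegree_le_of_drl_degree_le (hq g)

theorem MonomialOrder.IsReducedGroebnerBasis.map_eq_zero_of_mem_span {n : ℕ}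
    {K M : Type*} [Field K] [AddCommMonoid M] [Module K M] {F : Finset (MvPolynomial (Fin n) K)}
    {G : Finset (MvPolynomial (Fin n) K)}
    (hG : (drl n).IsReducedGroebnerBasis (Ideal.span (F : Set (MvPolynomial (Fin n) K))) G)
    {D : ℕ} (hGF : ∀ g ∈ G, ∀ k : Fin n →₀ ℕ, (monomial k (1 : K) * g).totalDegree ≤ D →
      ∃ h : MvPolynomial (Fin n) K → MvPolynomial (Fin n) K,
        monomial k (1 : K) * g = ∑ f ∈ F, h f * f ∧ ∀ f ∈ F, (h f * f).totalDegree ≤ D)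
    (L : MvPolynomial (Fin n) K →ₗ[K] M)
    (hL : ∀ f ∈ F, ∀ k : Fin n →₀ ℕ, k.degree + f.totalDegree ≤ D → L (monomial k 1 * f) = 0)
    {p : MvPolynomial (Fin n) K} (hp : p ∈ Ideal.span (F : Set (MvPolynomial (Fin n) K)))
    (hpD : p.totalDegree ≤ D) : L p = 0 := by
  refine hG.map_eq_zero_of_totalDegree_le L (fun g hg k hk => ?_) hp hpD
  obtain ⟨h, hgh, hdeg⟩ := hGF g hg k ((totalDegree_monomial_one_mul_le k g).trans hk)
  rw [hgh, map_sum]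
  exact Finset.sum_eq_zero fun f hf =>
    map_mul_eq_zero_of_forall_monomial_mul L (hL f hf) (hdeg f hf)

section MonomialFunctional

variable {σ R : Type*} [CommSemiring R]

noncomputable def monomialFunctional (v : (σ →₀ ℕ) → R) : MvPolynomial σ R →ₗ[R] R :=
  (basisMonomials σ R).constr R v

theorem monomialFunctional_apply (v : (σ →₀ ℕ) → R) (p : MvPolynomial σ R) :
    monomialFunctional v p = ∑ c ∈ p.support, p.coeff c * v c := by
  rw [monomialFunctional, Module.Basis.constr_apply]
  rfl

theorem monomialFunctional_monomial (v : (σ →₀ ℕ) → R) (c : σ →₀ ℕ) :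
    monomialFunctional v (monomial c 1) = v c :=
  (basisMonomials σ R).constr_basis R v c

theorem monomialFunctional_eval_monomial (x : σ → R) :
    monomialFunctional (fun c => eval x (monomial c 1)) = (aeval x).toLinearMap :=
  (basisMonomials σ R).ext fun c => by simp [monomialFunctional_monomial]

theorem monomialFunctional_eq_sum_mul_eval {ι : Type*} [Fintype ι] {η : ι → R}
    {a : ι → σ → R} {D : ℕ} {v : (σ →₀ ℕ) → R}
    (hv : ∀ c : σ →₀ ℕ, c.degree ≤ D → v c = ∑ i, η i * eval (a i) (monomial c 1))
    {p : MvPolynomial σ R} (hp : p.totalDegree ≤ D) :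
    monomialFunctional v p = ∑ i, η i * eval (a i) p := by
  have heval (x : σ → R) : eval x p = monomialFunctional (fun c => eval x (monomial c 1)) p := by
    simp [monomialFunctional_eval_monomial]
  simp_rw [heval, monomialFunctional_apply, Finset.mul_sum]
  rw [Finset.sum_comm]
  refine Finset.sum_congr rfl fun c hc => ?_
  rw [hv c ((le_totalDegree hc).trans hp), Finset.mul_sum]
  exact Finset.sum_congr rfl fun i _ => mul_left_comm _ _ _

end MonomialFunctional

theorem exists_eq_sum_mul_eval_of_forall_eval_eq_zero {ι σ K : Type*} [Fintype ι] [Field K]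
    (W : Submodule K (MvPolynomial σ K)) (L : MvPolynomial σ K →ₗ[K] K) (a : ι → σ → K)
    (h : ∀ p ∈ W, (∀ i, eval (a i) p = 0) → L p = 0) :
    ∃ η : ι → K, ∀ p ∈ W, L p = ∑ i, η i * eval (a i) p := by
  have hker : ⨅ i, LinearMap.ker ((aeval (a i)).toLinearMap ∘ₗ W.subtype) ≤
      LinearMap.ker (L ∘ₗ W.subtype) := by
    intro p hp
    simp only [Submodule.mem_iInf, LinearMap.mem_ker] at hp ⊢
    exact h p p.2 (by simpa using hp)
  obtain ⟨η, hη⟩ :=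
    (Submodule.mem_span_range_iff_exists_fun K).mp (mem_span_of_iInf_ker_le_ker hker)
  exact ⟨η, fun p hp => by simpa using (LinearMap.congr_fun hη ⟨p, hp⟩).symm⟩

theorem macaulay_solutions_are_affine_combinations_general
    (n w D : ℕ) (F : Finset (MvPolynomial (Fin n) ℂ))
    (hrad : (Ideal.span (F : Set (MvPolynomial (Fin n) ℂ))).IsRadical)
    (a : Fin w → (Fin n → ℂ))
    (hV : {x : Fin n → ℂ | ∀ f ∈ F, eval x f = 0} = Set.range a)
    (hD : ∀ G : Finset (MvPolynomial (Fin n) ℂ),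
      IsReducedGB (Ideal.span (F : Set (MvPolynomial (Fin n) ℂ))) G →
      ∀ g ∈ G, ∀ m : Fin n →₀ ℕ,
        (monomial m (1:ℂ) * g).totalDegree ≤ D →
        ∃ h : MvPolynomial (Fin n) ℂ → MvPolynomial (Fin n) ℂ,
          monomial m (1:ℂ) * g = ∑ f ∈ F, h f * f ∧
          ∀ f ∈ F, (h f * f).totalDegree ≤ D)
    (v : (Fin n →₀ ℕ) → ℂ) :
    (v 0 = 1 ∧ ∀ f ∈ F, ∀ m : Fin n →₀ ℕ,
        (∑ i, m i) + f.totalDegree ≤ D →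
        ∑ m' ∈ (monomial m (1:ℂ) * f).support,
          (monomial m (1:ℂ) * f).coeff m' * v m' = 0)
    ↔ ∃ η : Fin w → ℂ, (∑ i, η i) = 1 ∧
        ∀ m : Fin n →₀ ℕ, (∑ i, m i) ≤ D →
          v m = ∑ i, η i * eval (a i) (monomial m (1:ℂ)) := by
  have hIa : vanishingIdeal ℂ (Set.range a) = Ideal.span (F : Set (MvPolynomial (Fin n) ℂ)) := by
    rw [← hrad.radical, ← vanishingIdeal_zeroLocus_eq_radical (K := ℂ), zeroLocus_span, ← hV]
    simp
  have hroot (i : Fin w) : ∀ f ∈ F, eval (a i) f = 0 := (hV.symm ▸ Set.mem_range_self i :)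
  simp only [← monomialFunctional_apply, ← Finsupp.degree_eq_sum]
  constructor
  · rintro ⟨hv0, hmac⟩
    obtain ⟨G, hG⟩ := (MonomialOrder.drl n).exists_isReducedGroebnerBasis
      (Ideal.span (F : Set (MvPolynomial (Fin n) ℂ)))
    have hvanish (p) (hpD : p ∈ restrictTotalDegree (Fin n) ℂ D) (hp : ∀ i, eval (a i) p = 0) :
        monomialFunctional v p = 0 := by
      refine hG.map_eq_zero_of_mem_span (hD G hG.isReducedGB) _ hmac ?_
        ((mem_restrictTotalDegree _ _ _).mp hpD)
      rw [← hIa, mem_vanishingIdeal_iff]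
      rintro _ ⟨i, rfl⟩
      simpa using hp i
    obtain ⟨η, hη⟩ := exists_eq_sum_mul_eval_of_forall_eval_eq_zero _ _ a hvanish
    have hv (k : Fin n →₀ ℕ) (hk : k.degree ≤ D) :
        v k = ∑ i, η i * eval (a i) (monomial k 1) := by
      rw [← monomialFunctional_monomial v k]
      exact hη _ ((mem_restrictTotalDegree _ _ _).mpr ((totalDegree_monomial_le k 1).trans hk))
    exact ⟨η, by simpa [hv0] using (hv 0 (by simp)).symm, hv⟩
  · rintro ⟨η, hη1, hη⟩
    refine ⟨by simpa [hη1] using hη 0 (by simp), fun f hf k hk => ?_⟩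
    rw [monomialFunctional_eq_sum_mul_eval hη ((totalDegree_monomial_one_mul_le k f).trans hk)]
    simp [hroot _ f hf]

/-- Solutions of the Macaulay linear system: let `I = (F)` be radical with finite zero set
`{a_1,…,a_w}` and let `D` be at least the complete solving degree of `F` (hypothesis `hD`)
and at least the degrees of the members of `F`. An assignment `v` of values to monomials
(with `v(1) = 1`) satisfies all Macaulay equations in degree `≤ D` iff its restriction to
monomials of degree `≤ D` is an affine combination `Σ η_i m(a_i)` with `Σ η_i = 1`;
coordinates of degree `> D` are unconstrained. -/
theorem macaulay_solutions_are_affine_combinations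
    (n w D : ℕ) (F : Finset (MvPolynomial (Fin n) ℂ))
    (hrad : (Ideal.span (F : Set (MvPolynomial (Fin n) ℂ))).IsRadical)
    (a : Fin w → (Fin n → ℂ)) (ha : Function.Injective a)
    (hV : {x : Fin n → ℂ | ∀ f ∈ F, eval x f = 0} = Set.range a)
    (hDdeg : ∀ f ∈ F, f.totalDegree ≤ D)
    (hD : ∀ G : Finset (MvPolynomial (Fin n) ℂ),
      IsReducedGB (Ideal.span (F : Set (MvPolynomial (Fin n) ℂ))) G →
      ∀ g ∈ G, ∀ m : Fin n →₀ ℕ,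
        (monomial m (1:ℂ) * g).totalDegree ≤ D →
        ∃ h : MvPolynomial (Fin n) ℂ → MvPolynomial (Fin n) ℂ,
          monomial m (1:ℂ) * g = ∑ f ∈ F, h f * f ∧
          ∀ f ∈ F, (h f * f).totalDegree ≤ D)
    (v : (Fin n →₀ ℕ) → ℂ) :
    (v 0 = 1 ∧ ∀ f ∈ F, ∀ m : Fin n →₀ ℕ,
        (∑ i, m i) + f.totalDegree ≤ D →
        ∑ m' ∈ (monomial m (1:ℂ) * f).support,
          (monomial m (1:ℂ) * f).coeff m' * v m' = 0)
    ↔ ∃ η : Fin w → ℂ, (∑ i, η i) = 1 ∧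
        ∀ m : Fin n →₀ ℕ, (∑ i, m i) ≤ D →
          v m = ∑ i, η i * eval (a i) (monomial m (1:ℂ)) :=
  macaulay_solutions_are_affine_combinations_general n w D F hrad a hV hD v
end
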